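/- If a₁ ≠ a₀/2 (which can occur only when the periodic potential φ is asymmetric), then there exists a nonzero force f such that D(f) < 1/a₀ = D(0); in particular the minimum of the effective diffusion coefficient is attained at a nonzero value of f and is strictly smaller than 1/a₀. -/

import Mathlib

/-!
At `f = 0` everything is explicit: `w₀(0, x) = C e^{-φ x}` with `C = ∫₀¹ e^φ`, so `M₀(0) = a₀`,
`M₁(0) = a₀²` and `D(0) = 1/a₀`. Differentiating under the integral sign gives `M₀'(0) = -a₁`
and `M₁'(0) = -2 a₀ a₁ - a₀²/2`; the last term is `C²` times
`∫₀¹ ψ(x) ∫₀¹ ψ(x+s) s ds dx = (∫₀¹ ψ)²/2` for the periodic `ψ = e^{-φ}`, which holds because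
the autocorrelation `H(s) = ∫₀¹ ψ(x) ψ(x+s) dx` satisfies `H(1-s) = H(s)`. Hence
`D'(0) = (a₁ - a₀/2)/a₀² ≠ 0`, so `0` is not a local minimum of `D`.
-/

open MeasureTheory intervalIntegral Asymptotics Filter

noncomputable def w0 (φ : ℝ → ℝ) (f x : ℝ) : ℝ :=
  ∫ s in (0:ℝ)..1, Real.exp (φ (x + s) - φ x - f * s)

noncomputable def M0 (φ : ℝ → ℝ) (f : ℝ) : ℝ := ∫ x in (0:ℝ)..1, w0 φ f x

noncomputable def w1 (φ : ℝ → ℝ) (f x : ℝ) : ℝ :=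
  ∫ s in (0:ℝ)..1, (w0 φ f (x + s)) ^ 2 * Real.exp (φ (x + s) - φ x - f * s)

noncomputable def M1 (φ : ℝ → ℝ) (f : ℝ) : ℝ := ∫ x in (0:ℝ)..1, w1 φ f x

theorem hasDerivAt_intervalIntegral_of_continuous {E : Type*} [NormedAddCommGroup E]
    [NormedSpace ℝ E] {F F' : ℝ → ℝ → E} (hF : Continuous fun p : ℝ × ℝ => F p.1 p.2)
    (hF' : Continuous fun p : ℝ × ℝ => F' p.1 p.2)
    (hdiff : ∀ g t, HasDerivAt (F · t) (F' g t) g) (a b g₀ : ℝ) :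
    HasDerivAt (fun g => ∫ t in a..b, F g t) (∫ t in a..b, F' g₀ t) g₀ := by
  obtain ⟨C, hC⟩ := ((isCompact_closedBall g₀ 1).prod (isCompact_uIcc (a := a) (b := b))
    ).exists_bound_of_continuousOn hF'.continuousOn
  refine (intervalIntegral.hasDerivAt_integral_of_dominated_loc_of_deriv_le (bound := fun _ => C)
    (Metric.closedBall_mem_nhds g₀ one_pos)
    (.of_forall fun g => (hF.uncurry_left g).aestronglyMeasurable)
    ((hF.uncurry_left g₀).intervalIntegrable a b) (hF'.uncurry_left g₀).aestronglyMeasurable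
    (.of_forall fun t ht g hg => hC (g, t) ⟨hg, Set.uIoc_subset_uIcc ht⟩) intervalIntegrable_const
    (.of_forall fun t _ g _ => hdiff g t)).2

theorem intervalIntegral_integral_swap_of_continuous {E : Type*} [NormedAddCommGroup E]
    [NormedSpace ℝ E] {F : ℝ → ℝ → E} (hF : Continuous fun p : ℝ × ℝ => F p.1 p.2)
    {a b c d : ℝ} (hab : a ≤ b) (hcd : c ≤ d) :
    ∫ x in a..b, ∫ y in c..d, F x y = ∫ y in c..d, ∫ x in a..b, F x y := by
  have hint : Integrable (Function.uncurry F)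
      ((volume.restrict (Set.Ioc a b)).prod (volume.restrict (Set.Ioc c d))) := by
    rw [Measure.prod_restrict]
    exact (hF.continuousOn.integrableOn_compact (isCompact_Icc.prod isCompact_Icc)).mono_set
      (Set.prod_mono Set.Ioc_subset_Icc_self Set.Ioc_subset_Icc_self)
  simp_rw [integral_of_le hab, integral_of_le hcd]
  exact integral_integral_swap hint

theorem Function.Periodic.intervalIntegral_comp_add_left {g : ℝ → ℝ} {T : ℝ}
    (hg : Function.Periodic g T) (x : ℝ) :
    ∫ s in (0:ℝ)..T, g (x + s) = ∫ s in (0:ℝ)..T, g s := by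
  rw [integral_comp_add_left g x, add_zero, hg.intervalIntegral_add_eq x 0, zero_add]

theorem integral_mul_id_of_symm {H : ℝ → ℝ} (hH : Continuous H) (hsymm : ∀ s, H (1 - s) = H s) :
    ∫ s in (0:ℝ)..1, H s * s = (∫ s in (0:ℝ)..1, H s) / 2 := by
  have hreflect : ∫ s in (0:ℝ)..1, H s * s = ∫ s in (0:ℝ)..1, (H s - H s * s) := by
    simpa [hsymm, mul_sub] using
      (integral_comp_sub_left (fun u => H u * u) (1:ℝ) (a := 0) (b := 1)).symm
  rw [integral_sub (hH.intervalIntegrable 0 1)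
    ((by fun_prop : Continuous fun s => H s * s).intervalIntegrable 0 1)] at hreflect
  linarith

theorem Function.Periodic.integral_mul_integral_comp_add_mul_id {ψ : ℝ → ℝ} (hc : Continuous ψ)
    (hp : Function.Periodic ψ 1) :
    ∫ x in (0:ℝ)..1, ψ x * ∫ s in (0:ℝ)..1, ψ (x + s) * s = (∫ x in (0:ℝ)..1, ψ x) ^ 2 / 2 := by
  set H : ℝ → ℝ := fun s => ∫ x in (0:ℝ)..1, ψ x * ψ (x + s) with hH
  have hHc : Continuous H := continuous_parametric_intervalIntegral_of_continuous'
    (f := fun s x => ψ x * ψ (x + s)) (by fun_prop) 0 1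
  have hsymm : ∀ s, H (1 - s) = H s := fun s => by
    have hg : Function.Periodic (fun u => ψ u * ψ (u - s)) 1 := hp.mul (hp.sub_const s)
    calc H (1 - s) = ∫ x in (0:ℝ)..1, ψ x * ψ (x - s) := by
          simp only [hH, show ∀ x, x + (1 - s) = x - s + 1 from fun x => by ring, hp _]
      _ = ∫ x in (0:ℝ)..1, ψ (s + x) * ψ (s + x - s) := (hg.intervalIntegral_comp_add_left s).symm
      _ = H s := integral_congr fun x _ => by rw [add_sub_cancel_left, add_comm s, mul_comm]
  have hmoment : ∫ x in (0:ℝ)..1, ψ x * ∫ s in (0:ℝ)..1, ψ (x + s) * s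
      = ∫ s in (0:ℝ)..1, H s * s := by
    simp_rw [← intervalIntegral.integral_const_mul, hH, ← intervalIntegral.integral_mul_const,
      mul_assoc]
    exact intervalIntegral_integral_swap_of_continuous (by fun_prop) zero_le_one zero_le_one
  have hmass : ∫ s in (0:ℝ)..1, H s = (∫ x in (0:ℝ)..1, ψ x) ^ 2 := by
    rw [hH, ← intervalIntegral_integral_swap_of_continuous (by fun_prop) zero_le_one zero_le_one]
    simp_rw [intervalIntegral.integral_const_mul, hp.intervalIntegral_comp_add_left,
      intervalIntegral.integral_mul_const, sq]
  rw [hmoment, integral_mul_id_of_symm hHc hsymm, hmass]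

theorem exists_ne_lt_of_hasDerivAt_ne_zero {f : ℝ → ℝ} {f' x : ℝ} (hf : HasDerivAt f f' x)
    (hf' : f' ≠ 0) : ∃ y, y ≠ x ∧ f y < f x := by
  by_contra! h
  have hmin : IsLocalMin f x := Eventually.of_forall fun y => by
    rcases eq_or_ne y x with rfl | hy
    exacts [le_rfl, h y hy]
  exact hf' (hmin.hasDerivAt_eq_zero hf)

theorem intervalIntegral_exp_pos {g : ℝ → ℝ} (hg : Continuous g) :
    0 < ∫ x in (0:ℝ)..1, Real.exp (g x) :=
  intervalIntegral_pos_of_pos_on (Continuous.intervalIntegrable (by fun_prop) _ _)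
    (fun x _ => Real.exp_pos _) zero_lt_one

theorem hasDerivAt_exp_sub_mul (c s g : ℝ) :
    HasDerivAt (fun g => Real.exp (c - g * s)) (-s * Real.exp (c - g * s)) g :=
  ((hasDerivAt_mul_const s).const_sub c).exp.congr_deriv (mul_comm _ _)

noncomputable def w0' (φ : ℝ → ℝ) (f x : ℝ) : ℝ :=
  ∫ s in (0:ℝ)..1, -s * Real.exp (φ (x + s) - φ x - f * s)

noncomputable def w1' (φ : ℝ → ℝ) (f x : ℝ) : ℝ :=
  ∫ s in (0:ℝ)..1, (2 * w0 φ f (x + s) * w0' φ f (x + s) - s * w0 φ f (x + s) ^ 2) *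
    Real.exp (φ (x + s) - φ x - f * s)

section Model

variable {φ : ℝ → ℝ}

theorem continuous_w0 (hφc : Continuous φ) :
    Continuous fun p : ℝ × ℝ => w0 φ p.1 p.2 :=
  continuous_parametric_intervalIntegral_of_continuous'
    (f := fun (p : ℝ × ℝ) s => Real.exp (φ (p.2 + s) - φ p.2 - p.1 * s)) (by fun_prop) 0 1

theorem continuous_w0' (hφc : Continuous φ) :
    Continuous fun p : ℝ × ℝ => w0' φ p.1 p.2 :=
  continuous_parametric_intervalIntegral_of_continuous'
    (f := fun (p : ℝ × ℝ) s => -s * Real.exp (φ (p.2 + s) - φ p.2 - p.1 * s)) (by fun_prop) 0 1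

theorem continuous_w1 (hφc : Continuous φ) :
    Continuous fun p : ℝ × ℝ => w1 φ p.1 p.2 := by
  have hw0 := continuous_w0 hφc
  exact continuous_parametric_intervalIntegral_of_continuous'
    (f := fun (p : ℝ × ℝ) s => w0 φ p.1 (p.2 + s) ^ 2 * Real.exp (φ (p.2 + s) - φ p.2 - p.1 * s))
    (by fun_prop) 0 1

theorem continuous_w1' (hφc : Continuous φ) :
    Continuous fun p : ℝ × ℝ => w1' φ p.1 p.2 := by
  have hw0 := continuous_w0 hφc
  have hw0' := continuous_w0' hφc
  exact continuous_parametric_intervalIntegral_of_continuous'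
    (f := fun (p : ℝ × ℝ) s =>
      (2 * w0 φ p.1 (p.2 + s) * w0' φ p.1 (p.2 + s) - s * w0 φ p.1 (p.2 + s) ^ 2) *
        Real.exp (φ (p.2 + s) - φ p.2 - p.1 * s))
    (by fun_prop) 0 1

theorem hasDerivAt_w0 (hφc : Continuous φ) (f x : ℝ) : HasDerivAt (w0 φ · x) (w0' φ f x) f :=
  hasDerivAt_intervalIntegral_of_continuous
    (F := fun g s => Real.exp (φ (x + s) - φ x - g * s))
    (F' := fun g s => -s * Real.exp (φ (x + s) - φ x - g * s)) (by fun_prop) (by fun_prop)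
    (fun g s => hasDerivAt_exp_sub_mul _ s g) 0 1 f

theorem hasDerivAt_M0 (hφc : Continuous φ) (f : ℝ) :
    HasDerivAt (M0 φ) (∫ x in (0:ℝ)..1, w0' φ f x) f :=
  hasDerivAt_intervalIntegral_of_continuous (continuous_w0 hφc) (continuous_w0' hφc)
    (fun g x => hasDerivAt_w0 hφc g x) 0 1 f

theorem hasDerivAt_w1 (hφc : Continuous φ) (f x : ℝ) : HasDerivAt (w1 φ · x) (w1' φ f x) f := by
  have hw0 := continuous_w0 hφc
  have hw0' := continuous_w0' hφc
  refine hasDerivAt_intervalIntegral_of_continuous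
    (F := fun g s => w0 φ g (x + s) ^ 2 * Real.exp (φ (x + s) - φ x - g * s))
    (F' := fun g s => (2 * w0 φ g (x + s) * w0' φ g (x + s) - s * w0 φ g (x + s) ^ 2) *
      Real.exp (φ (x + s) - φ x - g * s)) (by fun_prop) (by fun_prop) (fun g s => ?_) 0 1 f
  exact (((hasDerivAt_w0 hφc g (x + s)).fun_pow 2).mul
    (hasDerivAt_exp_sub_mul _ s g)).congr_deriv (by ring)

theorem hasDerivAt_M1 (hφc : Continuous φ) (f : ℝ) :
    HasDerivAt (M1 φ) (∫ x in (0:ℝ)..1, w1' φ f x) f :=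
  hasDerivAt_intervalIntegral_of_continuous (continuous_w1 hφc) (continuous_w1' hφc)
    (fun g x => hasDerivAt_w1 hφc g x) 0 1 f

theorem integral_w0'_zero :
    ∫ x in (0:ℝ)..1, w0' φ 0 x
      = -∫ x in (0:ℝ)..1, ∫ s in (0:ℝ)..1, Real.exp (φ (x + s) - φ x) * s := by
  simp only [w0', zero_mul, sub_zero, neg_mul, intervalIntegral.integral_neg]
  simp_rw [mul_comm _ (Real.exp _)]

theorem periodic_w0' (hφper : Function.Periodic φ 1) (f : ℝ) :
    Function.Periodic (w0' φ f) 1 := fun x => by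
  simp only [w0', add_right_comm x 1, hφper _]

theorem w0_zero (hφper : Function.Periodic φ 1) (x : ℝ) :
    w0 φ 0 x = (∫ s in (0:ℝ)..1, Real.exp (φ s)) * Real.exp (-φ x) := by
  have hshift := Function.Periodic.intervalIntegral_comp_add_left
    (g := fun u => Real.exp (φ u)) (hφper.comp Real.exp) x
  simp only [w0, zero_mul, sub_zero, Real.exp_sub]
  simp only [div_eq_mul_inv, ← Real.exp_neg, intervalIntegral.integral_mul_const, hshift]

theorem M0_zero (hφper : Function.Periodic φ 1) :
    M0 φ 0 = (∫ x in (0:ℝ)..1, Real.exp (-φ x)) * ∫ s in (0:ℝ)..1, Real.exp (φ s) := by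
  simp only [M0, w0_zero hφper]
  rw [intervalIntegral.integral_const_mul, mul_comm]

theorem w1_zero (hφper : Function.Periodic φ 1) (x : ℝ) :
    w1 φ 0 x = M0 φ 0 * (∫ s in (0:ℝ)..1, Real.exp (φ s)) * Real.exp (-φ x) := by
  have hshift := Function.Periodic.intervalIntegral_comp_add_left
    (g := fun u => Real.exp (-φ u)) (hφper.comp fun y => Real.exp (-y)) x
  have hpt : ∀ s, w0 φ 0 (x + s) ^ 2 * Real.exp (φ (x + s) - φ x - 0 * s)
      = (∫ s in (0:ℝ)..1, Real.exp (φ s)) ^ 2 * Real.exp (-φ x) * Real.exp (-φ (x + s)) := by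
    intro s
    rw [w0_zero hφper, zero_mul, sub_zero, Real.exp_sub, Real.exp_neg, Real.exp_neg]
    field_simp
  simp only [w1, hpt, intervalIntegral.integral_const_mul, hshift, M0_zero hφper]
  ring

theorem M1_zero (hφper : Function.Periodic φ 1) : M1 φ 0 = M0 φ 0 ^ 2 := by
  simp only [M1, w1_zero hφper, intervalIntegral.integral_const_mul]
  rw [M0_zero hφper]
  ring

theorem w1'_zero (hφc : Continuous φ) (hφper : Function.Periodic φ 1) (x : ℝ) :
    w1' φ 0 x = Real.exp (-φ x) * (2 * (∫ s in (0:ℝ)..1, Real.exp (φ s)) *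
      (∫ y in (0:ℝ)..1, w0' φ 0 y) -
        (∫ s in (0:ℝ)..1, Real.exp (φ s)) ^ 2 * ∫ s in (0:ℝ)..1, Real.exp (-φ (x + s)) * s) := by
  set C := ∫ s in (0:ℝ)..1, Real.exp (φ s)
  have hpt : ∀ s, (2 * w0 φ 0 (x + s) * w0' φ 0 (x + s) - s * w0 φ 0 (x + s) ^ 2) *
      Real.exp (φ (x + s) - φ x - 0 * s) =
        Real.exp (-φ x) * (2 * C * w0' φ 0 (x + s) - C ^ 2 * (Real.exp (-φ (x + s)) * s)) := by
    intro s
    rw [w0_zero hφper, zero_mul, sub_zero, Real.exp_sub, Real.exp_neg, Real.exp_neg]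
    field_simp
    ring
  have hw0' := continuous_w0' hφc
  simp only [w1', hpt, intervalIntegral.integral_const_mul]
  rw [intervalIntegral.integral_sub ?_ ?_, intervalIntegral.integral_const_mul,
    intervalIntegral.integral_const_mul, (periodic_w0' hφper 0).intervalIntegral_comp_add_left]
  all_goals exact Continuous.intervalIntegrable (by fun_prop) _ _

theorem integral_w1'_zero (hφc : Continuous φ) (hφper : Function.Periodic φ 1) :
    ∫ x in (0:ℝ)..1, w1' φ 0 x = 2 * M0 φ 0 * (∫ x in (0:ℝ)..1, w0' φ 0 x) - M0 φ 0 ^ 2 / 2 := by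
  have hJ := Function.Periodic.integral_mul_integral_comp_add_mul_id
    (ψ := fun u => Real.exp (-φ u)) (by fun_prop) (hφper.comp fun y => Real.exp (-y))
  set K := 2 * (∫ s in (0:ℝ)..1, Real.exp (φ s)) * ∫ x in (0:ℝ)..1, w0' φ 0 x
  calc ∫ x in (0:ℝ)..1, w1' φ 0 x
      = ∫ x in (0:ℝ)..1, (K * Real.exp (-φ x) - (∫ s in (0:ℝ)..1, Real.exp (φ s)) ^ 2 *
          (Real.exp (-φ x) * ∫ s in (0:ℝ)..1, Real.exp (-φ (x + s)) * s)) := by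
        simp only [w1'_zero hφc hφper]
        congr 1 with x
        ring
    _ = K * (∫ x in (0:ℝ)..1, Real.exp (-φ x)) - (∫ s in (0:ℝ)..1, Real.exp (φ s)) ^ 2 *
          ((∫ x in (0:ℝ)..1, Real.exp (-φ x)) ^ 2 / 2) := by
        rw [intervalIntegral.integral_sub ?_ ?_, intervalIntegral.integral_const_mul,
          intervalIntegral.integral_const_mul, hJ]
        all_goals exact Continuous.intervalIntegrable (by fun_prop) _ _
    _ = _ := by rw [M0_zero hφper]; ring

end Model

/-- If `a₁ ≠ a₀/2` (possible only for an asymmetric potential), then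
there is a nonzero force `f` with `D(f) < 1/a₀ = D(0)`; in particular the minimum
of the effective diffusion coefficient is attained at a nonzero `f` and is
strictly smaller than `1/a₀`. -/
theorem stmt_14 (φ : ℝ → ℝ) (hφc : Continuous φ) (hφper : ∀ x, φ (x + 1) = φ x)
    (a0 a1 : ℝ)
    (ha0 : a0 = (∫ x in (0:ℝ)..1, Real.exp (-φ x)) * ∫ s in (0:ℝ)..1, Real.exp (φ s))
    (ha1 : a1 = ∫ x in (0:ℝ)..1, ∫ s in (0:ℝ)..1, Real.exp (φ (x + s) - φ x) * s)
    (D : ℝ → ℝ) (hD : ∀ f, D f = M1 φ f / (M0 φ f) ^ 3)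
    (hasym : a1 ≠ a0 / 2) :
    (∃ f : ℝ, f ≠ 0 ∧ D f < 1 / a0) ∧ D 0 = 1 / a0 := by
  have ha0pos : 0 < a0 := ha0 ▸ mul_pos (intervalIntegral_exp_pos (by fun_prop))
    (intervalIntegral_exp_pos hφc)
  have hM0 : M0 φ 0 = a0 := by rw [M0_zero hφper, ha0]
  have hM1 : M1 φ 0 = a0 ^ 2 := by rw [M1_zero hφper, hM0]
  have hM0' : HasDerivAt (M0 φ) (-a1) 0 := by
    simpa only [integral_w0'_zero, ← ha1] using hasDerivAt_M0 hφc 0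
  have hM1' : HasDerivAt (M1 φ) (-2 * a0 * a1 - a0 ^ 2 / 2) 0 := by
    simpa only [integral_w1'_zero hφc hφper, integral_w0'_zero, ← ha1, hM0, mul_neg,
      neg_mul] using hasDerivAt_M1 hφc 0
  have hD0 : D 0 = 1 / a0 := by
    rw [hD, hM1, hM0]
    field_simp
  have hD' : HasDerivAt D ((a1 - a0 / 2) / a0 ^ 2) 0 := by
    rw [show D = fun f => M1 φ f / M0 φ f ^ 3 from funext hD]
    refine (hM1'.div (hM0'.fun_pow 3) (by rw [hM0]; positivity)).congr_deriv ?_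
    rw [hM0, hM1]
    field_simp
    ring
  obtain ⟨f, hf, hlt⟩ := exists_ne_lt_of_hasDerivAt_ne_zero hD'
    (div_ne_zero (sub_ne_zero.2 hasym) (by positivity))
  exact ⟨⟨f, hf, hD0 ▸ hlt⟩, hD0⟩
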